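/- Let 0 < α < 2 and ω ∈ ℂ. Then for all t > 0, the derivative identity ∂_t E_{α,1}(ω t^α) = ω t^{α-1} E_{α,α}(ω t^α) holds. -/

import Mathlib

/-!
Since `Γ(x + 1) = x Γ(x)`, differentiating `z^(n+1) / Γ(α(n+1) + 1)` gives
`α⁻¹ z^n / Γ(αn + α)`, so termwise `E_{α,1}' = α⁻¹ E_{α,α}` in the complex variable. Termwise
differentiation is legitimate because `Γ(x)` eventually dominates every exponential `Q^x`, which
makes the series converge absolutely and locally uniformly on all of `ℂ`. The chain rule with
`d/dt (ω t^α) = α ω t^(α-1)` finishes.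
-/

open Complex Real

/-- The Mittag-Leffler function `E_{α,β}(z) = ∑ zⁿ / Γ(αn+β)`. -/
noncomputable def mlE (α β : ℝ) (z : ℂ) : ℂ :=
  ∑' n : ℕ, z ^ n / Complex.Gamma ((α * n + β : ℝ) : ℂ)

open Filter
open scoped Nat

theorem Real.eventually_rpow_le_Gamma {Q : ℝ} (hQ : 1 ≤ Q) :
    ∀ᶠ x : ℝ in atTop, Q ^ x ≤ Real.Gamma x := by
  -- `Γ(x) ≥ ⌊x - 1⌋!`, and `2 ⌊x - 1⌋ ≥ x` once `x ≥ 4`: hence the comparison with `Q ^ 2`.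
  have hfact : ∀ᶠ m : ℕ in atTop, (Q ^ 2) ^ m ≤ (m ! : ℝ) := by
    filter_upwards [(FloorSemiring.tendsto_pow_div_factorial_atTop (Q ^ 2)).eventually
      (eventually_le_nhds zero_lt_one)] with m hm
    rwa [div_le_one (by positivity)] at hm
  have hfloor : Tendsto (fun x : ℝ => ⌊x - 1⌋₊) atTop atTop :=
    tendsto_nat_floor_atTop.comp (tendsto_atTop_add_const_right _ (-1) tendsto_id)
  filter_upwards [hfloor.eventually hfact, eventually_ge_atTop 4] with x hm hx
  set m := ⌊x - 1⌋₊
  have hm_le : (m : ℝ) + 1 ≤ x := by linarith [Nat.floor_le (by linarith : 0 ≤ x - 1)]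
  have hm_gt : x - 2 < m := by linarith [Nat.lt_floor_add_one (x - 1)]
  calc Q ^ x ≤ Q ^ ((2 * m : ℕ) : ℝ) :=
        Real.rpow_le_rpow_of_exponent_le hQ (by push_cast; linarith)
    _ = (Q ^ 2) ^ m := by rw [Real.rpow_natCast, pow_mul]
    _ ≤ m ! := hm
    _ = Real.Gamma (m + 1) := (Real.Gamma_nat_eq_factorial m).symm
    _ ≤ Real.Gamma x := Real.Gamma_strictMonoOn_Ici.monotoneOn
        (Set.mem_Ici.2 (by linarith)) (Set.mem_Ici.2 (by linarith)) hm_le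

theorem summable_pow_div_Gamma {α : ℝ} (hα : 0 < α) (β r : ℝ) :
    Summable fun n : ℕ => r ^ n / Real.Gamma (α * n + β) := by
  obtain ⟨Q, hQ1, hrQ⟩ : ∃ Q : ℝ, 1 ≤ Q ∧ 2 * |r| ≤ Q ^ α :=
    ((eventually_ge_atTop 1).and ((tendsto_rpow_atTop hα).eventually_ge_atTop _)).exists
  have hQ : 0 < Q := by linarith
  have hlin : Tendsto (fun n : ℕ => α * n + β) atTop atTop :=
    tendsto_atTop_add_const_right _ β
      ((tendsto_natCast_atTop_atTop (R := ℝ)).const_mul_atTop hα)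
  refine Summable.of_norm_bounded_eventually_nat
    (summable_geometric_two.mul_left (Q ^ (-β))) ?_
  filter_upwards [hlin.eventually (Real.eventually_rpow_le_Gamma hQ1)] with n hn
  have hΓ : 0 < Real.Gamma (α * n + β) := (Real.rpow_pos_of_pos hQ _).trans_le hn
  rw [norm_div, norm_pow, Real.norm_eq_abs, Real.norm_of_nonneg hΓ.le, div_le_iff₀ hΓ]
  calc |r| ^ n ≤ (Q ^ α / 2) ^ n := pow_le_pow_left₀ (abs_nonneg r) (by linarith) n
    _ = Q ^ (-β) * (1 / 2) ^ n * Q ^ (α * n + β) := by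
        rw [Real.rpow_add hQ, Real.rpow_neg hQ.le, Real.rpow_mul hQ.le, Real.rpow_natCast,
          div_pow, one_div_pow]
        field_simp
    _ ≤ Q ^ (-β) * (1 / 2) ^ n * Real.Gamma (α * n + β) := by gcongr

theorem summable_norm_mlE_term {α : ℝ} (hα : 0 < α) (β : ℝ) (z : ℂ) :
    Summable fun n : ℕ => ‖z ^ n / Complex.Gamma ((α * n + β : ℝ) : ℂ)‖ := by
  simpa only [norm_div, norm_pow, Complex.Gamma_ofReal, Complex.norm_real, Real.norm_eq_abs,
    abs_div, abs_pow, abs_norm] using (summable_pow_div_Gamma hα β ‖z‖).abs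

theorem hasDerivAt_pow_succ_div_Gamma {α : ℝ} (hα : α ≠ 0) (n : ℕ) (z : ℂ) :
    HasDerivAt (fun w : ℂ => w ^ (n + 1) / Complex.Gamma ((α * (n + 1 : ℕ) + 1 : ℝ) : ℂ))
      ((α : ℂ)⁻¹ * (z ^ n / Complex.Gamma ((α * n + α : ℝ) : ℂ))) z := by
  have hx : ((α * n + α : ℝ) : ℂ) = α * (n + 1) := by push_cast; ring
  have hΓ : Complex.Gamma ((α * (n + 1 : ℕ) + 1 : ℝ) : ℂ) =
      α * (n + 1) * Complex.Gamma ((α * n + α : ℝ) : ℂ) := by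
    rw [hx, ← Complex.Gamma_add_one _
      (mul_ne_zero (ofReal_ne_zero.2 hα) (Nat.cast_add_one_ne_zero n))]
    push_cast; ring_nf
  refine ((hasDerivAt_pow (n + 1) z).div_const _).congr_deriv ?_
  rw [hΓ, Nat.add_sub_cancel, Nat.cast_succ, mul_div_right_comm, ← div_div,
    div_mul_cancel_right₀ (Nat.cast_add_one_ne_zero n)]
  ring

theorem hasDerivAt_mlE_one {α : ℝ} (hα : 0 < α) (z : ℂ) :
    HasDerivAt (mlE α 1) ((α : ℂ)⁻¹ * mlE α α z) z := by
  have hsplit : mlE α 1 = fun w =>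
      1 + ∑' n : ℕ, w ^ (n + 1) / Complex.Gamma ((α * (n + 1 : ℕ) + 1 : ℝ) : ℂ) := by
    funext w
    rw [mlE, (summable_norm_mlE_term hα 1 w).of_norm.tsum_eq_zero_add]
    simp
  set R := ‖z‖ + 1
  have hderiv := hasDerivAt_tsum_of_isPreconnected
    ((summable_norm_mlE_term hα α (R : ℂ)).mul_left ‖(α : ℂ)⁻¹‖) Metric.isOpen_ball
    (convex_ball (0 : ℂ) R).isPreconnected (fun n w _ => hasDerivAt_pow_succ_div_Gamma hα.ne' n w)
    ?_ (Metric.mem_ball_self (by positivity)) (by simp) (y := z) (mem_ball_zero_iff.2 (by simp [R]))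
  · rw [tsum_mul_left] at hderiv
    rw [hsplit]
    exact hderiv.const_add 1
  · intro n w hw
    rw [norm_mul, norm_div, norm_div, norm_pow, norm_pow, Complex.norm_real,
      Real.norm_of_nonneg (by positivity : (0 : ℝ) ≤ R)]
    gcongr
    exact (mem_ball_zero_iff.1 hw).le

theorem mittagLeffler_deriv1_general (α : ℝ) (hα0 : 0 < α) (ω : ℂ) (t : ℝ)
    (ht : 0 < t) :
    HasDerivAt (fun s : ℝ => mlE α 1 (ω * (s ^ α : ℝ)))
      (ω * ((t ^ (α - 1) : ℝ) : ℂ) * mlE α α (ω * (t ^ α : ℝ))) t := by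
  have hinner : HasDerivAt (fun s : ℝ => ω * ((s ^ α : ℝ) : ℂ))
      (ω * ((α * t ^ (α - 1) : ℝ) : ℂ)) t :=
    (Real.hasDerivAt_rpow_const (Or.inl ht.ne')).ofReal_comp.const_mul ω
  refine ((hasDerivAt_mlE_one hα0 _).comp t hinner).congr_deriv ?_
  have hα : (α : ℂ) ≠ 0 := ofReal_ne_zero.2 hα0.ne'
  push_cast
  field_simp

theorem mittagLeffler_deriv1 (α : ℝ) (hα0 : 0 < α) (hα2 : α < 2) (ω : ℂ) (t : ℝ)
    (ht : 0 < t) :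
    HasDerivAt (fun s : ℝ => mlE α 1 (ω * (s ^ α : ℝ)))
      (ω * ((t ^ (α - 1) : ℝ) : ℂ) * mlE α α (ω * (t ^ α : ℝ))) t :=
  mittagLeffler_deriv1_general α hα0 ω t ht
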